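/- An ortholattice L satisfies, for all a, b, c ∈ L, the identity (a ≡ b) ⊓ (b ≡ c) = (a ≡ b) ⊓ (a ≡ c) if and only if L is orthomodular. -/

import Mathlib

/-!
If `L` is orthomodular, then `a ≡ b` commutes with `b`, and commutation with a fixed element is
preserved by meets. Splitting `(a ≡ b) ⊓ (b ≡ c)` along `b` and `bᶜ` therefore shows
`(a ≡ b) ⊓ (b ≡ c) ≤ a ≡ c`, which together with the symmetry of `≡` gives the identity.
Conversely, for `a ≤ b` the identity at `(b, a, ⊥)` reads `(a ⊔ bᶜ) ⊓ aᶜ = bᶜ`, whose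
orthocomplement is the orthomodular law.
-/

/-- An ortholattice: a bounded lattice with an orthocomplementation. -/
class Ortholattice (α : Type*) extends Lattice α, BoundedOrder α, Compl α where
  compl_compl : ∀ x : α, xᶜᶜ = x
  compl_antitone : ∀ x y : α, x ≤ y → yᶜ ≤ xᶜ
  inf_compl : ∀ x : α, x ⊓ xᶜ = ⊥
  sup_compl : ∀ x : α, x ⊔ xᶜ = ⊤

/-- The identity operation `a ≡ b = (a ⊓ b) ⊔ (aᶜ ⊓ bᶜ)`. -/
def olEquiv {α : Type*} [Ortholattice α] (a b : α) : α := (a ⊓ b) ⊔ (aᶜ ⊓ bᶜ)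

namespace Ortholattice

variable {α : Type*} [Ortholattice α]

theorem compl_le_compl {x y : α} (h : x ≤ y) : yᶜ ≤ xᶜ := compl_antitone x y h

theorem le_of_compl_le_compl {x y : α} (h : xᶜ ≤ yᶜ) : y ≤ x := by
  simpa only [compl_compl] using compl_le_compl h

theorem compl_sup (x y : α) : (x ⊔ y)ᶜ = xᶜ ⊓ yᶜ := by
  refine le_antisymm (le_inf (compl_le_compl le_sup_left) (compl_le_compl le_sup_right)) ?_
  refine le_of_compl_le_compl ?_
  rw [compl_compl]
  exact sup_le (le_of_compl_le_compl (by rw [compl_compl]; exact inf_le_left))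
    (le_of_compl_le_compl (by rw [compl_compl]; exact inf_le_right))

theorem compl_inf (x y : α) : (x ⊓ y)ᶜ = xᶜ ⊔ yᶜ := by
  rw [← compl_compl (xᶜ ⊔ yᶜ), compl_sup, compl_compl, compl_compl]

theorem compl_bot : (⊥ : α)ᶜ = ⊤ := by
  rw [← sup_compl (⊥ : α), bot_sup_eq]

theorem olEquiv_comm (a b : α) : olEquiv a b = olEquiv b a := by
  rw [olEquiv, olEquiv, inf_comm, inf_comm aᶜ]

theorem olEquiv_of_le {a b : α} (h : a ≤ b) : olEquiv b a = a ⊔ bᶜ := by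
  rw [olEquiv, inf_eq_right.mpr h, inf_eq_left.mpr (compl_le_compl h)]

theorem olEquiv_bot (a : α) : olEquiv a ⊥ = aᶜ := by
  rw [olEquiv, inf_bot_eq, compl_bot, inf_top_eq, bot_sup_eq]

variable (α) in
def IsOrthomodular : Prop := ∀ a b : α, a ≤ b → a ⊔ (aᶜ ⊓ b) = b

theorem isOrthomodular_of_olEquiv_inf_olEquiv_eq
    (H : ∀ a b c : α, olEquiv a b ⊓ olEquiv b c = olEquiv a b ⊓ olEquiv a c) :
    IsOrthomodular α := by
  intro a b hab
  have h := H b a ⊥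
  rw [olEquiv_of_le hab, olEquiv_bot, olEquiv_bot,
    inf_eq_right.mpr (le_sup_right : bᶜ ≤ a ⊔ bᶜ)] at h
  calc a ⊔ (aᶜ ⊓ b) = ((a ⊔ bᶜ) ⊓ aᶜ)ᶜ := by
        rw [compl_inf, compl_sup, compl_compl, compl_compl, sup_comm]
    _ = b := by rw [h, compl_compl]

def Commutes (x y : α) : Prop := x = (x ⊓ y) ⊔ (x ⊓ yᶜ)

theorem Commutes.compl_right {x y : α} (h : Commutes x y) : Commutes x yᶜ := by
  rw [Commutes, compl_compl, sup_comm]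
  exact h

theorem Commutes.sup_left {x y z : α} (hx : Commutes x z) (hy : Commutes y z) :
    Commutes (x ⊔ y) z := by
  refine le_antisymm ?_ (sup_le inf_le_left inf_le_left)
  calc x ⊔ y = ((x ⊓ z) ⊔ (x ⊓ zᶜ)) ⊔ ((y ⊓ z) ⊔ (y ⊓ zᶜ)) := by rw [← hx, ← hy]
    _ ≤ ((x ⊔ y) ⊓ z) ⊔ ((x ⊔ y) ⊓ zᶜ) := sup_le
        (sup_le_sup (inf_le_inf_right z le_sup_left) (inf_le_inf_right zᶜ le_sup_left))
        (sup_le_sup (inf_le_inf_right z le_sup_right) (inf_le_inf_right zᶜ le_sup_right))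

namespace IsOrthomodular

variable (h : IsOrthomodular α)
include h

theorem inf_compl_sup_eq {a b : α} (hab : a ≤ b) : b ⊓ (bᶜ ⊔ a) = a := by
  have hc := h bᶜ aᶜ (compl_le_compl hab)
  rw [compl_compl] at hc
  calc b ⊓ (bᶜ ⊔ a) = (bᶜ ⊔ (b ⊓ aᶜ))ᶜ := by rw [compl_sup, compl_inf, compl_compl, compl_compl]
    _ = a := by rw [hc, compl_compl]

theorem inf_sup_eq_left {z u v : α} (hu : u ≤ z) (hv : v ≤ zᶜ) : z ⊓ (u ⊔ v) = u := by
  refine le_antisymm ?_ (le_inf hu le_sup_left)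
  calc z ⊓ (u ⊔ v) ≤ z ⊓ (zᶜ ⊔ u) := inf_le_inf_left z (sup_comm u zᶜ ▸ sup_le_sup_left hv u)
    _ = u := h.inf_compl_sup_eq hu

theorem commutes_symm {x y : α} (hxy : Commutes x y) : Commutes y x := by
  -- The orthomodular law splits `y` as `(x ⊓ y) ⊔ ((x ⊓ y)ᶜ ⊓ y)`.
  have hc : (x ⊓ y)ᶜ ⊓ y ≤ xᶜ := by
    have hx : xᶜ = (x ⊓ y)ᶜ ⊓ (x ⊓ yᶜ)ᶜ := by rw [← compl_sup, ← hxy]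
    rw [hx]
    refine le_inf inf_le_left (inf_le_right.trans ?_)
    rw [compl_inf, compl_compl]
    exact le_sup_right
  refine le_antisymm ?_ (sup_le inf_le_left inf_le_left)
  conv_lhs => rw [← h (x ⊓ y) y inf_le_right]
  exact sup_le_sup (le_inf inf_le_right inf_le_left) (le_inf inf_le_right hc)

theorem commutes_compl_left {x y : α} (hxy : Commutes x y) : Commutes xᶜ y :=
  h.commutes_symm (h.commutes_symm hxy).compl_right

theorem commutes_inf_left {x y z : α} (hx : Commutes x z) (hy : Commutes y z) :
    Commutes (x ⊓ y) z := by
  have := h.commutes_compl_left ((h.commutes_compl_left hx).sup_left (h.commutes_compl_left hy))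
  rwa [compl_sup, compl_compl, compl_compl] at this

theorem olEquiv_inf_right (a b : α) : olEquiv a b ⊓ b = a ⊓ b := by
  rw [olEquiv, inf_comm]
  exact h.inf_sup_eq_left inf_le_right inf_le_right

theorem olEquiv_inf_compl_right (a b : α) : olEquiv a b ⊓ bᶜ = aᶜ ⊓ bᶜ := by
  rw [olEquiv, inf_comm, sup_comm]
  exact h.inf_sup_eq_left inf_le_right (by rw [compl_compl]; exact inf_le_right)

theorem olEquiv_commutes_right (a b : α) : Commutes (olEquiv a b) b := by
  rw [Commutes, h.olEquiv_inf_right, h.olEquiv_inf_compl_right, olEquiv]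

theorem olEquiv_inf_olEquiv_le (a b c : α) : olEquiv a b ⊓ olEquiv b c ≤ olEquiv a c := by
  have hb : olEquiv a b ⊓ olEquiv b c ⊓ b ≤ a ⊓ c := by
    rw [inf_inf_distrib_right, h.olEquiv_inf_right, olEquiv_comm b c, h.olEquiv_inf_right]
    exact le_inf (inf_le_left.trans inf_le_left) (inf_le_right.trans inf_le_left)
  have hb' : olEquiv a b ⊓ olEquiv b c ⊓ bᶜ ≤ aᶜ ⊓ cᶜ := by
    rw [inf_inf_distrib_right, h.olEquiv_inf_compl_right, olEquiv_comm b c,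
      h.olEquiv_inf_compl_right]
    exact le_inf (inf_le_left.trans inf_le_left) (inf_le_right.trans inf_le_left)
  calc olEquiv a b ⊓ olEquiv b c
      = (olEquiv a b ⊓ olEquiv b c ⊓ b) ⊔ (olEquiv a b ⊓ olEquiv b c ⊓ bᶜ) :=
        h.commutes_inf_left (h.olEquiv_commutes_right a b)
          (olEquiv_comm b c ▸ h.olEquiv_commutes_right c b)
    _ ≤ olEquiv a c := sup_le_sup hb hb'

theorem olEquiv_inf_olEquiv_eq (a b c : α) :
    olEquiv a b ⊓ olEquiv b c = olEquiv a b ⊓ olEquiv a c := by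
  refine le_antisymm (le_inf inf_le_left (h.olEquiv_inf_olEquiv_le a b c)) ?_
  refine le_inf inf_le_left ?_
  rw [olEquiv_comm a b]
  exact h.olEquiv_inf_olEquiv_le b a c

end IsOrthomodular

end Ortholattice

open Ortholattice in
/-- An ortholattice satisfies `(a ≡ b) ⊓ (b ≡ c) = (a ≡ b) ⊓ (a ≡ c)` for all `a b c`
iff it is orthomodular. -/
theorem stmt_1 (α : Type*) [Ortholattice α] :
    (∀ a b c : α, olEquiv a b ⊓ olEquiv b c = olEquiv a b ⊓ olEquiv a c) ↔
      (∀ a b : α, a ≤ b → a ⊔ (aᶜ ⊓ b) = b) :=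
  ⟨isOrthomodular_of_olEquiv_inf_olEquiv_eq, IsOrthomodular.olEquiv_inf_olEquiv_eq⟩
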